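/- arXiv:2510.11609 — 3 statements merged into one kernel-verified Lean document; each statement's English description precedes it below -/
import Mathlib

section
/- For a design D consisting of N distinct points of {-1,1}^m (an injective function from Fin N to {-1,1}^m), the quantity \sum_{s=1}^m b_s(D), where b_s(D) = (1/N^2) \sum_{|g|=s} J_g(D)^2 and J_g(D) = \sum_{h=1}^N \prod_{i \in g} D(h)_i, depends only on m and N and not on the choice of D. Explicitly, \sum_{s=1}^m b_s(D) = (N(2^m - N))/N^2 = (2^m - N)/N. -/
/-- J-characteristic of a two-level design for a word `g`. -/
def Jchar {N m : ℕ} (D : Fin N → Fin m → ℤ) (g : Finset (Fin m)) : ℤ :=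
  ∑ h, ∏ i ∈ g, D h i

/-- Generalized word count `b_s`. -/
def gwc {N m : ℕ} (D : Fin N → Fin m → ℤ) (s : ℕ) : ℚ :=
  (∑ g ∈ Finset.univ.powerset.filter (fun g : Finset (Fin m) => g.card = s),
    ((Jchar D g : ℤ) : ℚ) ^ 2) / (N : ℚ) ^ 2

/-!
Summing `J_g(D)^2` over all words `g`, including the empty one, and exchanging sums gives
`∑_{h, h'} ∏_i (1 + D(h)_i D(h')_i)`. For sign vectors the product is `2^m` when the two runs
coincide and `0` otherwise, so by injectivity the total is `N 2^m`. The empty word contributes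
`J_∅ = N`, whence `∑_{s ≥ 1} b_s = (N 2^m - N^2) / N^2`.
-/

open Finset

theorem Finset.sum_Icc_one_sum_powerset_card_eq {ι M : Type*} [AddCommGroup M]
    (s : Finset ι) (f : Finset ι → M) :
    ∑ k ∈ Icc 1 #s, ∑ t ∈ s.powerset with #t = k, f t = ∑ t ∈ s.powerset, f t - f ∅ := by
  classical
  have hnonempty : {t ∈ s.powerset | #t ∈ Icc 1 #s} = s.powerset.erase ∅ := by
    ext t
    simp only [mem_filter, mem_powerset, mem_Icc, mem_erase, Nat.one_le_iff_ne_zero, ne_eq,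
      card_eq_zero]
    exact ⟨fun ⟨hts, hne, _⟩ => ⟨hne, hts⟩, fun ⟨hne, hts⟩ => ⟨hts, hne, card_le_card hts⟩⟩
  rw [sum_fiberwise_eq_sum_filter, hnonempty, sum_erase_eq_sub (empty_mem_powerset s)]

section SignVectors

variable {ι R : Type*} [Fintype ι] [CommRing R] {x y : ι → R}

theorem prod_mul_self_add_one_of_sign (hx : ∀ i, x i = 1 ∨ x i = -1) :
    ∏ i, (x i * x i + 1) = 2 ^ Fintype.card ι := by
  rw [← card_univ, ← prod_const]
  refine prod_congr rfl fun i _ => ?_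
  rcases hx i with h | h <;> rw [h] <;> norm_num

theorem prod_mul_add_one_eq_zero_of_ne (hx : ∀ i, x i = 1 ∨ x i = -1)
    (hy : ∀ i, y i = 1 ∨ y i = -1) (hxy : x ≠ y) :
    ∏ i, (x i * y i + 1) = 0 := by
  obtain ⟨i, hi⟩ := Function.ne_iff.mp hxy
  refine prod_eq_zero (mem_univ i) ?_
  rcases hx i with h | h <;> rcases hy i with h' | h' <;> rw [h, h'] at hi ⊢ <;>
    first | exact absurd rfl hi | ring

end SignVectors

theorem sum_sq_sum_prod_eq_sum_sum_prod {κ ι R : Type*} [Fintype κ] [Fintype ι] [CommSemiring R]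
    (D : κ → ι → R) :
    ∑ g : Finset ι, (∑ h, ∏ i ∈ g, D h i) ^ 2 = ∑ h, ∑ h', ∏ i, (D h i * D h' i + 1) := by
  simp_rw [prod_add_one, powerset_univ, prod_mul_distrib, sq, sum_mul_sum]
  rw [sum_comm]
  exact sum_congr rfl fun h _ => sum_comm

variable {N m : ℕ} {D : Fin N → Fin m → ℤ}

theorem Jchar_empty : Jchar D ∅ = N := by
  simp [Jchar]

theorem sum_Jchar_sq (hD : ∀ h i, D h i = 1 ∨ D h i = -1) (hinj : Function.Injective D) :
    ∑ g, Jchar D g ^ 2 = N * 2 ^ m := by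
  have hdiag (h : Fin N) : ∑ h', ∏ i, (D h i * D h' i + 1) = 2 ^ m := by
    rw [sum_eq_single h (fun h' _ hne => prod_mul_add_one_eq_zero_of_ne (hD h) (hD h')
      (hinj.ne hne.symm)) (by simp), prod_mul_self_add_one_of_sign (hD h), Fintype.card_fin]
  simp only [Jchar, sum_sq_sum_prod_eq_sum_sum_prod, hdiag, sum_const, card_univ,
    Fintype.card_fin, nsmul_eq_mul]

theorem sum_gwc_injective_general (m N : ℕ)
    (D : Fin N → Fin m → ℤ) (hD : ∀ h i, D h i = 1 ∨ D h i = -1)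
    (hinj : Function.Injective D) :
    ∑ s ∈ Finset.Icc 1 m, gwc D s = ((2 ^ m : ℚ) - N) / N := by
  have hJ : ∑ g, (Jchar D g : ℚ) ^ 2 = N * 2 ^ m := by
    exact_mod_cast sum_Jchar_sq hD hinj
  have hnum : ∑ s ∈ Icc 1 m, ∑ g ∈ univ.powerset with #g = s, (Jchar D g : ℚ) ^ 2
      = N * 2 ^ m - N ^ 2 := by
    have h := sum_Icc_one_sum_powerset_card_eq univ fun g => (Jchar D g : ℚ) ^ 2
    rwa [card_univ, Fintype.card_fin, powerset_univ, hJ, Jchar_empty] at h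
  simp only [gwc, ← sum_div, hnum]
  rcases N.eq_zero_or_pos with rfl | hN
  · simp
  · field_simp

/-- For an unreplicated (injective) two-level design, the total generalized
word count is the constant `(2^m - N)/N`. -/
theorem sum_gwc_injective (m N : ℕ) (hN : 0 < N)
    (D : Fin N → Fin m → ℤ) (hD : ∀ h i, D h i = 1 ∨ D h i = -1)
    (hinj : Function.Injective D) :
    ∑ s ∈ Finset.Icc 1 m, gwc D s = ((2 ^ m : ℚ) - N) / N :=
  sum_gwc_injective_general m N D hD hinj
end

section
/- Let D : Fin N \to {-1,1}^m be an injective design whose image contains the point x^- = (-1,1,...,1) but not the point (1,...,1). Let D' be obtained from D by changing the first coordinate of the row equal to x^- from -1 to +1. Then \sum_{s=1}^m b_s(D') = \sum_{s=1}^m b_s(D). -/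
/-!
Expanding `J_g(D)²` and summing over all words `g` gives
`∑_g J_g(D)² = ∑_{h,h'} ∏_i (D(h)_i D(h')_i + 1)`, and for sign vectors the product is `2^m`
when the rows agree and `0` otherwise. So for an injective design `∑_g J_g(D)² = N 2^m`, and
`∑_{s ≥ 1} b_s(D) = (N 2^m - N²) / N²` depends only on `N` and `m`; moving a row to a point
outside the design keeps it an injective design with the same `N`.
-/

open Finset

lemma prod_mul_add_one_eq_ite {ι : Type*} [Fintype ι] {x y : ι → ℤ}
    (hx : ∀ i, x i = 1 ∨ x i = -1) (hy : ∀ i, y i = 1 ∨ y i = -1) :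
    ∏ i, (x i * y i + 1) = if x = y then 2 ^ Fintype.card ι else 0 := by
  split_ifs with hxy
  · subst hxy
    calc ∏ i, (x i * x i + 1) = ∏ _i : ι, (2 : ℤ) :=
          prod_congr rfl fun i _ => by rcases hx i with h | h <;> simp [h]
      _ = 2 ^ Fintype.card ι := by simp
  · obtain ⟨i, hi⟩ := Function.ne_iff.mp hxy
    refine prod_eq_zero (mem_univ i) ?_
    rcases hx i with h | h <;> rcases hy i with h' | h' <;> simp_all

lemma sum_powerset_Jchar_sq {N m : ℕ} (D : Fin N → Fin m → ℤ)
    (hD : ∀ h i, D h i = 1 ∨ D h i = -1) (hinj : Function.Injective D) :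
    ∑ g ∈ (univ : Finset (Fin m)).powerset, Jchar D g ^ 2 = N * 2 ^ m := by
  calc ∑ g ∈ (univ : Finset (Fin m)).powerset, Jchar D g ^ 2
      = ∑ h, ∑ h', ∑ g ∈ (univ : Finset (Fin m)).powerset, ∏ i ∈ g, D h i * D h' i := by
        simp only [Jchar, sq, sum_mul_sum, ← prod_mul_distrib]
        rw [sum_comm]
        exact sum_congr rfl fun _ _ => sum_comm
    _ = ∑ h, ∑ h', if D h = D h' then 2 ^ m else 0 := by
        simp_rw [← prod_add_one, prod_mul_add_one_eq_ite (hD _) (hD _), Fintype.card_fin]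
    _ = N * 2 ^ m := by
        simp [hinj.eq_iff]

lemma sum_gwc_Icc_eq {N m : ℕ} (D : Fin N → Fin m → ℤ) :
    ∑ s ∈ Icc 1 m, gwc D s
      = (∑ g ∈ (univ : Finset (Fin m)).powerset, (Jchar D g : ℚ) ^ 2 - N ^ 2) / N ^ 2 := by
  have hJempty : Jchar D ∅ = N := by simp [Jchar]
  rw [sum_powerset, card_univ, Fintype.card_fin, range_eq_Ico,
    sum_eq_sum_Ico_succ_bot (Nat.succ_pos m), zero_add, Nat.succ_eq_add_one,
    Ico_add_one_right_eq_Icc]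
  simp only [gwc, ← sum_div, ← powersetCard_eq_filter, powersetCard_zero, sum_singleton, hJempty]
  push_cast
  ring

lemma sum_gwc_Icc_of_injective {N m : ℕ} (D : Fin N → Fin m → ℤ)
    (hD : ∀ h i, D h i = 1 ∨ D h i = -1) (hinj : Function.Injective D) :
    ∑ s ∈ Icc 1 m, gwc D s = ((N : ℚ) * 2 ^ m - N ^ 2) / N ^ 2 := by
  have hsq := congrArg (Int.cast : ℤ → ℚ) (sum_powerset_Jchar_sq D hD hinj)
  push_cast at hsq
  rw [sum_gwc_Icc_eq, hsq]

lemma Function.Injective.update_of_forall_ne {α β : Type*} [DecidableEq α] {f : α → β}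
    (hf : Function.Injective f) (a : α) {b : β} (hb : ∀ x, f x ≠ b) :
    Function.Injective (Function.update f a b) := by
  intro x y hxy
  simp only [Function.update_apply] at hxy
  split_ifs at hxy with hx hy hy
  · rw [hx, hy]
  · exact absurd hxy.symm (hb y)
  · exact absurd hxy (hb x)
  · exact hf hxy

theorem sum_gwc_coordinate_exchange_general (m N : ℕ)
    (D : Fin N → Fin m → ℤ) (hD : ∀ h i, D h i = 1 ∨ D h i = -1)
    (hinj : Function.Injective D) (h0 : Fin N)
    (hnot : ∀ h, D h ≠ fun _ => 1)
    (D' : Fin N → Fin m → ℤ)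
    (hD' : D' = Function.update D h0 (fun _ => 1)) :
    ∑ s ∈ Finset.Icc 1 m, gwc D' s = ∑ s ∈ Finset.Icc 1 m, gwc D s := by
  have hD'sign : ∀ h i, D' h i = 1 ∨ D' h i = -1 := by
    intro h i
    rw [hD', Function.update_apply]
    split_ifs
    exacts [Or.inl rfl, hD h i]
  have hD'inj : Function.Injective D' := hD' ▸ hinj.update_of_forall_ne h0 hnot
  rw [sum_gwc_Icc_of_injective D' hD'sign hD'inj, sum_gwc_Icc_of_injective D hD hinj]

/-- If an injective design contains the point `(-1,1,…,1)` but not `(1,…,1)`,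
then changing the first coordinate of that row from `-1` to `+1` leaves the
total generalized word count unchanged. -/
theorem sum_gwc_coordinate_exchange (m N : ℕ) (hm : 0 < m)
    (D : Fin N → Fin m → ℤ) (hD : ∀ h i, D h i = 1 ∨ D h i = -1)
    (hinj : Function.Injective D) (h0 : Fin N)
    (hrow : D h0 = fun j => if j = ⟨0, hm⟩ then -1 else 1)
    (hnot : ∀ h, D h ≠ fun _ => 1)
    (D' : Fin N → Fin m → ℤ)
    (hD' : D' = Function.update D h0 (fun _ => 1)) :
    ∑ s ∈ Finset.Icc 1 m, gwc D' s = ∑ s ∈ Finset.Icc 1 m, gwc D s :=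
  sum_gwc_coordinate_exchange_general m N D hD hinj h0 hnot D' hD'
end

section
/- For any design D : Fin N \to {-1,1}^m (not necessarily injective), \sum_{s=1}^m b_s(D) = (2^m r(D) - N^2)/N^2, where r(D) = \sum_{h,h'} [D(h)=D(h')] counts ordered pairs of equal rows. In particular, since r(D) \ge N with equality iff D is injective, \sum_{s=1}^m b_s(D) \ge (2^m - N)/N, with equality if and only if all rows of D are distinct. -/
/-- Number of ordered pairs of equal rows of a design. -/
def rD {N m : ℕ} (D : Fin N → Fin m → ℤ) : ℕ :=
  ∑ h, ∑ h', (if D h = D h' then 1 else 0)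

lemma prodone {N m : ℕ} (D : Fin N → Fin m → ℤ) (hD : ∀ h i, D h i = 1 ∨ D h i = -1)
    (h h' : Fin N) :
    (∏ i, (D h i * D h' i + 1)) = if D h = D h' then 2 ^ m else 0 := by
  by_cases he : D h = D h'
  · simp only [he, if_pos]
    have : ∀ i, D h' i * D h' i + 1 = 2 := by
      intro i; rcases hD h' i with h1 | h1 <;> rw [h1] <;> ring
    rw [Finset.prod_congr rfl (fun i _ => this i)]
    simp [Finset.card_univ]
  · simp only [he, if_neg, not_false_iff]
    obtain ⟨i, hi⟩ : ∃ i, D h i ≠ D h' i := by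
      by_contra hc; push_neg at hc; exact he (funext hc)
    apply Finset.prod_eq_zero (Finset.mem_univ i)
    rcases hD h i with h1 | h1 <;> rcases hD h' i with h2 | h2 <;>
      simp [h1, h2] at hi ⊢

lemma sumJsq {N m : ℕ} (D : Fin N → Fin m → ℤ) (hD : ∀ h i, D h i = 1 ∨ D h i = -1) :
    ∑ g ∈ (Finset.univ : Finset (Fin m)).powerset, Jchar D g ^ 2
      = 2 ^ m * rD D := by
  have step1 : ∀ g : Finset (Fin m), Jchar D g ^ 2
      = ∑ h, ∑ h', ∏ i ∈ g, (D h i * D h' i) := by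
    intro g
    rw [Jchar, sq, Finset.sum_mul_sum]
    congr 1; funext h; congr 1; funext h'
    rw [← Finset.prod_mul_distrib]
  rw [Finset.sum_congr rfl (fun g _ => step1 g), Finset.sum_comm]
  rw [Finset.sum_congr rfl (fun h _ => Finset.sum_comm)]
  have step2 : ∀ h h' : Fin N,
      ∑ g ∈ (Finset.univ : Finset (Fin m)).powerset, ∏ i ∈ g, (D h i * D h' i)
        = if D h = D h' then 2 ^ m else 0 := by
    intro h h'
    rw [← prodone D hD h h', Finset.prod_add]
    apply Finset.sum_congr rfl
    intro t _
    simp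
  rw [Finset.sum_congr rfl (fun h _ => Finset.sum_congr rfl (fun h' _ => step2 h h'))]
  rw [rD]
  push_cast
  rw [Finset.mul_sum]
  apply Finset.sum_congr rfl
  intro h _
  rw [Finset.mul_sum]
  apply Finset.sum_congr rfl
  intro h' _
  split <;> simp

lemma one_le_inner {N m : ℕ} (D : Fin N → Fin m → ℤ) (h : Fin N) :
    1 ≤ ∑ h', (if D h = D h' then 1 else 0 : ℕ) := by
  have := Finset.single_le_sum (f := fun h' => if D h = D h' then (1:ℕ) else 0)
    (fun _ _ => Nat.zero_le _) (Finset.mem_univ h)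
  simpa using this

lemma rD_ge {N m : ℕ} (D : Fin N → Fin m → ℤ) : N ≤ rD D := by
  rw [rD]
  calc N = ∑ _h : Fin N, 1 := by simp
  _ ≤ _ := Finset.sum_le_sum fun h _ => one_le_inner D h

lemma rD_eq_iff {N m : ℕ} (D : Fin N → Fin m → ℤ) :
    rD D = N ↔ Function.Injective D := by
  constructor
  · intro hr h1 h2 he
    by_contra hne
    have hNpos : 0 < N := h1.pos
    have two_le : 2 ≤ ∑ h', (if D h1 = D h' then 1 else 0 : ℕ) := by
      have hs := Finset.sum_le_sum_of_subset (f := fun h' => if D h1 = D h' then (1:ℕ) else 0)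
        (Finset.subset_univ ({h1, h2} : Finset (Fin N)))
      rw [Finset.sum_pair hne] at hs
      simpa [he] using hs
    have : N + 1 ≤ rD D := by
      rw [rD, ← Finset.sum_erase_add _ _ (Finset.mem_univ h1)]
      calc N + 1 = (N - 1) + 2 := by omega
      _ ≤ _ := by
        apply add_le_add _ two_le
        calc N - 1 = ∑ _h ∈ Finset.univ.erase h1, 1 := by
              simp [Finset.card_erase_of_mem]
        _ ≤ _ := Finset.sum_le_sum fun h _ => one_le_inner D h
    omega
  · intro hinj
    rw [rD]
    have key : ∀ h : Fin N, ∑ h', (if D h = D h' then 1 else 0) = 1 := by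
      intro h
      have e : ∀ h', (if D h = D h' then 1 else 0 : ℕ) = if h = h' then 1 else 0 := by
        intro h'
        congr 1
        simp only [eq_iff_iff]
        exact ⟨fun e => hinj e, fun e => by rw [e]⟩
      simp [e]
    simp [key]

/-- For a general (possibly replicated) design, the total generalized word
count equals `(2^m r(D) - N^2)/N^2`; it is at least `(2^m - N)/N`, with
equality iff all rows are distinct. -/
theorem sum_gwc_general (m N : ℕ) (hN : 0 < N)
    (D : Fin N → Fin m → ℤ) (hD : ∀ h i, D h i = 1 ∨ D h i = -1) :
    (∑ s ∈ Finset.Icc 1 m, gwc D s =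
      ((2 ^ m : ℚ) * (rD D : ℚ) - (N : ℚ) ^ 2) / (N : ℚ) ^ 2) ∧
    (((2 ^ m : ℚ) - N) / N ≤ ∑ s ∈ Finset.Icc 1 m, gwc D s) ∧
    (∑ s ∈ Finset.Icc 1 m, gwc D s = ((2 ^ m : ℚ) - N) / N ↔
      Function.Injective D) := by
  have hNq : (0:ℚ) < N := by exact_mod_cast hN
  set f : Finset (Fin m) → ℚ := fun g => ((Jchar D g : ℤ) : ℚ) ^ 2 with hf
  have htot : ∑ s ∈ Finset.range (m+1),
      ∑ g ∈ Finset.univ.powerset.filter (fun g : Finset (Fin m) => g.card = s), f g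
      = ∑ g ∈ (Finset.univ : Finset (Fin m)).powerset, f g := by
    apply Finset.sum_fiberwise_of_maps_to
    intro g hg
    rw [Finset.mem_range, Nat.lt_succ_iff]
    exact le_trans (Finset.card_le_card (Finset.mem_powerset.mp hg))
      (by simp [Finset.card_univ])
  have hrange : Finset.range (m+1) = insert 0 (Finset.Icc 1 m) := by
    ext x; simp [Finset.mem_range, Finset.mem_Icc]; omega
  have h0 : ∑ g ∈ Finset.univ.powerset.filter
      (fun g : Finset (Fin m) => g.card = 0), f g = (N:ℚ)^2 := by
    have : Finset.univ.powerset.filter (fun g : Finset (Fin m) => g.card = 0)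
        = {∅} := by
      ext g; simp [Finset.card_eq_zero]
    rw [this, Finset.sum_singleton, hf]
    simp [Jchar]
  have hcast : ∑ g ∈ (Finset.univ : Finset (Fin m)).powerset, f g
      = (2:ℚ)^m * (rD D : ℚ) := by
    rw [hf]
    have h1 := congrArg (fun z : ℤ => (z : ℚ)) (sumJsq D hD)
    push_cast at h1
    exact h1
  have part1 : ∑ s ∈ Finset.Icc 1 m, gwc D s =
      ((2 ^ m : ℚ) * (rD D : ℚ) - (N : ℚ) ^ 2) / (N : ℚ) ^ 2 := by
    unfold gwc
    rw [← Finset.sum_div]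
    congr 1
    have : ∑ s ∈ Finset.Icc 1 m,
        ∑ g ∈ Finset.univ.powerset.filter (fun g : Finset (Fin m) => g.card = s), f g
        = 2^m * (rD D : ℚ) - (N:ℚ)^2 := by
      have hins := htot
      rw [hrange, Finset.sum_insert (by simp), h0, hcast] at hins
      linarith
    exact this
  refine ⟨part1, ?_, ?_⟩
  · rw [part1]
    have e : ((2:ℚ)^m - N)/N = ((2:ℚ)^m * N - N^2)/N^2 := by
      field_simp
    rw [e]
    gcongr
    exact_mod_cast rD_ge D
  · rw [part1, ← rD_eq_iff D]
    rw [div_eq_div_iff (by positivity) (ne_of_gt hNq)]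
    constructor
    · intro h
      have h0 : (2:ℚ)^m * N * ((rD D:ℚ) - N) = 0 := by linear_combination h
      rcases mul_eq_zero.mp h0 with h1 | h1
      · exfalso; have : (0:ℚ) < 2^m * N := by positivity
        simp [h1] at this
      · have : (rD D : ℚ) = N := by linarith
        exact_mod_cast this
    · intro h
      have : (rD D : ℚ) = N := by exact_mod_cast h
      rw [this]; ring
end
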